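/- Let r and R be positive integers with r ≤ R, let n ≥ 0, and let (x_k)_{k=1}^{2n+1} be a non-increasing sequence with 0 < x ≤ x_k ≤ X < ∞ for all k. Then (∑_{k=1}^{2n+1} (-1)^{k+1} x_k^r)^{1/r} ≤ (∑_{k=1}^{2n+1} (-1)^{k+1} x_k^R)^{1/R}. -/

import Mathlib

/-!
Put `y k = x k ^ r` and `f t = t ^ (R / r)`, which is convex on `[0, ∞)` since `R / r ≥ 1`.
The claim is then Szegő's inequality `f (y₁ - y₂ + ⋯ + y₂ₙ₊₁) ≤ f y₁ - f y₂ + ⋯ + f y₂ₙ₊₁`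
for a non-increasing sequence, raised to the power `1 / R`. Szegő's inequality follows by
induction, adding two terms at a time: for `c ≤ b ≤ a` the pair `(a - b + c, b)` lies between
`c` and `a` and has the same sum, so convexity gives `f (a - b + c) + f b ≤ f a + f c`.
-/

open Finset

def altSum (y : ℕ → ℝ) (n : ℕ) : ℝ :=
  ∑ k ∈ Icc 1 (2 * n + 1), (-1) ^ (k + 1) * y k

lemma altSum_zero (y : ℕ → ℝ) : altSum y 0 = y 1 := by
  simp [altSum]

lemma altSum_succ (y : ℕ → ℝ) (n : ℕ) :
    altSum y (n + 1) = altSum y n - y (2 * n + 2) + y (2 * n + 3) := by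
  have h : 2 * (n + 1) + 1 = 2 * n + 1 + 1 + 1 := by ring
  rw [altSum, h, sum_Icc_succ_top (by omega), sum_Icc_succ_top (by omega), ← altSum]
  simp only [pow_succ, pow_mul]
  ring

lemma altSum_mem_Icc {y : ℕ → ℝ} {n : ℕ}
    (hy : ∀ k, 1 ≤ k → k < 2 * n + 1 → y (k + 1) ≤ y k) :
    altSum y n ∈ Set.Icc (y (2 * n + 1)) (y 1) := by
  induction n with
  | zero => simp [altSum_zero]
  | succ n ih =>
    obtain ⟨hlow, hupp⟩ := ih fun k hk hkn ↦ hy k hk (by omega)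
    have h₁ : y (2 * n + 2) ≤ y (2 * n + 1) := hy (2 * n + 1) (by omega) (by omega)
    have h₂ : y (2 * n + 3) ≤ y (2 * n + 2) := hy (2 * n + 2) (by omega) (by omega)
    rw [show 2 * (n + 1) + 1 = 2 * n + 3 by ring, altSum_succ]
    constructor <;> linarith

lemma ConvexOn.map_sub_add_le {s : Set ℝ} {f : ℝ → ℝ} (hf : ConvexOn ℝ s f) {a b c : ℝ}
    (ha : a ∈ s) (hc : c ∈ s) (hcb : c ≤ b) (hba : b ≤ a) :
    f (a - b + c) ≤ f a - f b + f c := by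
  rcases hcb.trans hba |>.eq_or_lt with hca | hca
  · obtain rfl : b = a := le_antisymm hba (hca ▸ hcb)
    subst hca
    simp
  -- `b` and `a - b + c` are the convex combinations of `a` and `c` with swapped weights `θ`, `1 - θ`
  set θ := (b - c) / (a - c)
  have hθ₀ : 0 ≤ θ := div_nonneg (by linarith) (by linarith)
  have hθ₁ : θ ≤ 1 := (div_le_one (by linarith)).2 (by linarith)
  have hb : θ • a + (1 - θ) • c = b := by
    simp only [smul_eq_mul, θ]; field_simp; ring
  have hb' : (1 - θ) • a + θ • c = a - b + c := by
    simp only [smul_eq_mul, θ]; field_simp; ring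
  have h₁ := hf.2 ha hc hθ₀ (sub_nonneg.2 hθ₁) (add_sub_cancel θ 1)
  have h₂ := hf.2 ha hc (sub_nonneg.2 hθ₁) hθ₀ (sub_add_cancel 1 θ)
  rw [hb] at h₁
  rw [hb'] at h₂
  simp only [smul_eq_mul] at h₁ h₂
  linarith

theorem ConvexOn.map_altSum_le {s : Set ℝ} {f : ℝ → ℝ} (hf : ConvexOn ℝ s f) {y : ℕ → ℝ}
    {n : ℕ} (hys : ∀ k, 1 ≤ k → k ≤ 2 * n + 1 → y k ∈ s)
    (hy : ∀ k, 1 ≤ k → k < 2 * n + 1 → y (k + 1) ≤ y k) :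
    f (altSum y n) ≤ altSum (fun k ↦ f (y k)) n := by
  induction n with
  | zero => simp [altSum_zero]
  | succ n ih =>
    have hy' : ∀ k, 1 ≤ k → k < 2 * n + 1 → y (k + 1) ≤ y k :=
      fun k hk hkn ↦ hy k hk (by omega)
    obtain ⟨hlow, hupp⟩ := altSum_mem_Icc hy'
    have hS : altSum y n ∈ s :=
      hf.1.ordConnected.out (hys (2 * n + 1) (by omega) (by omega)) (hys 1 le_rfl (by omega))
        ⟨hlow, hupp⟩
    have h₁ : y (2 * n + 2) ≤ y (2 * n + 1) := hy (2 * n + 1) (by omega) (by omega)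
    have h₂ : y (2 * n + 3) ≤ y (2 * n + 2) := hy (2 * n + 2) (by omega) (by omega)
    rw [altSum_succ, altSum_succ]
    calc f (altSum y n - y (2 * n + 2) + y (2 * n + 3))
        ≤ f (altSum y n) - f (y (2 * n + 2)) + f (y (2 * n + 3)) :=
          hf.map_sub_add_le hS (hys _ (by omega) le_rfl) h₂ (h₁.trans hlow)
      _ ≤ _ := by
          gcongr
          exact ih (fun k hk hkn ↦ hys k hk (by omega)) hy'

/-- The left-hand inequality in (geom) of the paper: for a non-increasing positive
sequence `x_1 ≥ ... ≥ x_(2n+1)` and positive integers `r ≤ R`, the `r`-mean alternating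
sum is at most the `R`-mean alternating sum. -/
theorem alternating_power_mean_le (r R : ℕ) (hr : 0 < r) (hrR : r ≤ R) (n : ℕ)
    (x : ℕ → ℝ) (xl X : ℝ) (hxl : 0 < xl)
    (hx_mono : ∀ k, 1 ≤ k → k < 2 * n + 1 → x (k + 1) ≤ x k)
    (hx_bdd : ∀ k, 1 ≤ k → k ≤ 2 * n + 1 → xl ≤ x k ∧ x k ≤ X) :
    (∑ k ∈ Finset.Icc 1 (2 * n + 1), (-1 : ℝ) ^ (k + 1) * x k ^ r) ^ (1 / (r : ℝ)) ≤
      (∑ k ∈ Finset.Icc 1 (2 * n + 1), (-1 : ℝ) ^ (k + 1) * x k ^ R) ^ (1 / (R : ℝ)) := by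
  have hx₀ : ∀ k, 1 ≤ k → k ≤ 2 * n + 1 → 0 ≤ x k :=
    fun k hk hkn ↦ hxl.le.trans (hx_bdd k hk hkn).1
  have hr' : (0 : ℝ) < r := by exact_mod_cast hr
  have hR' : (0 : ℝ) < R := hr'.trans_le (by exact_mod_cast hrR)
  have hp : 1 ≤ (R : ℝ) / r := (one_le_div hr').2 (by exact_mod_cast hrR)
  have hpow : ∀ k, 1 ≤ k → k ≤ 2 * n + 1 → (x k ^ r) ^ ((R : ℝ) / r) = x k ^ R := fun k hk hkn ↦ by
    rw [← Real.rpow_natCast, ← Real.rpow_mul (hx₀ k hk hkn), mul_div_cancel₀ _ hr'.ne',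
      Real.rpow_natCast]
  have hanti : ∀ k, 1 ≤ k → k < 2 * n + 1 → x (k + 1) ^ r ≤ x k ^ r := fun k hk hkn ↦
    pow_le_pow_left₀ (hx₀ _ (by omega) (by omega)) (hx_mono k hk hkn) r
  have hszego : altSum (x · ^ r) n ^ ((R : ℝ) / r) ≤ altSum (x · ^ R) n := by
    refine ((convexOn_rpow hp).map_altSum_le (fun k hk hkn ↦ ?_) hanti).trans_eq ?_
    · exact pow_nonneg (hx₀ k hk hkn) r
    · exact sum_congr rfl fun k hk ↦ congrArg _ (hpow k (mem_Icc.1 hk).1 (mem_Icc.1 hk).2)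
  have hS₀ : 0 ≤ altSum (x · ^ r) n :=
    (pow_nonneg (hx₀ _ (by omega) le_rfl) r).trans (altSum_mem_Icc (y := (x · ^ r)) hanti).1
  calc altSum (x · ^ r) n ^ (1 / (r : ℝ))
      = (altSum (x · ^ r) n ^ ((R : ℝ) / r)) ^ (1 / (R : ℝ)) := by
        rw [← Real.rpow_mul hS₀]
        congr 1
        field_simp
    _ ≤ altSum (x · ^ R) n ^ (1 / (R : ℝ)) := by gcongr
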